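/- For 1 ≤ i < j ≤ d, the operator Ĥ_{i,j} = x_i x_j (∂_{x_i} − ∂_{x_j})² + [(γ_i+1)x_j − (γ_j+1)x_i](∂_{x_i} − ∂_{x_j}) commutes with the Appell–Lauricella operator M_d^γ. -/

import Mathlib

/-- The partial derivative `∂f/∂xᵢ` at `x`. -/
noncomputable def pd {m : ℕ} (i : Fin m) (f : (Fin m → ℝ) → ℝ) (x : Fin m → ℝ) : ℝ :=
  deriv (fun t : ℝ => f (Function.update x i t)) (x i)

/-- The Appell–Lauricella operator `M_d^γ` in `d+1` variables, with parameters
`γ : Fin (d+2) → ℝ` (so `γ k` is the paper's `γ_{k+1}`). -/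
noncomputable def Mop {d : ℕ} (γ : Fin (d + 2) → ℝ) (f : (Fin (d + 1) → ℝ) → ℝ)
    (x : Fin (d + 1) → ℝ) : ℝ :=
  ∑ i, (1 - x i) * x i * pd i (pd i f) x
    - 2 * ∑ i : Fin (d + 1), ∑ l ∈ Finset.Ioi i, x i * x l * pd i (pd l f) x
    + ∑ i, ((γ i.castSucc + 1) - ((∑ k, γ k) + ((d : ℝ) + 1) + 1) * x i) * pd i f x

/-- The operator `Ĥ_{i,j} = x_i x_j (∂_i − ∂_j)² + [(γ_i+1)x_j − (γ_j+1)x_i](∂_i − ∂_j)`. -/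
noncomputable def Hop {d : ℕ} (γ : Fin (d + 2) → ℝ) (i j : Fin (d + 1))
    (f : (Fin (d + 1) → ℝ) → ℝ) (x : Fin (d + 1) → ℝ) : ℝ :=
  x i * x j * (pd i (pd i f) x - pd i (pd j f) x - pd j (pd i f) x + pd j (pd j f) x)
    + ((γ i.castSucc + 1) * x j - (γ j.castSucc + 1) * x i) * (pd i f x - pd j f x)

namespace S14

open Finset

variable {m : ℕ}

/-- Directional derivative. -/
noncomputable def Dv (v : Fin m → ℝ) (f : (Fin m → ℝ) → ℝ) (x : Fin m → ℝ) : ℝ :=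
  fderiv ℝ f x v

/-- Smoothness. -/
def e (i : Fin m) : Fin m → ℝ := Pi.single i 1

def Sm (f : (Fin m → ℝ) → ℝ) : Prop := ContDiff ℝ ((⊤ : ℕ∞) : WithTop ℕ∞) f

theorem topaddle : ((⊤ : ℕ∞) : WithTop ℕ∞) + 1 ≤ ((⊤ : ℕ∞) : WithTop ℕ∞) := by
  exact_mod_cast (le_top : (⊤ : ℕ∞) + 1 ≤ ⊤)

theorem Sm.diffAt {f : (Fin m → ℝ) → ℝ} (hf : Sm f) (x : Fin m → ℝ) :
    DifferentiableAt ℝ f x :=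
  (hf.differentiable (by simp)) x

theorem Sm.dv {f : (Fin m → ℝ) → ℝ} (hf : Sm f) (v : Fin m → ℝ) : Sm (Dv v f) := by
  have h : ContDiff ℝ ((⊤ : ℕ∞) : WithTop ℕ∞) (fderiv ℝ f) := hf.fderiv_right topaddle
  exact h.clm_apply contDiff_const

theorem Sm.add {f g : (Fin m → ℝ) → ℝ} (hf : Sm f) (hg : Sm g) :
    Sm (fun y => f y + g y) := ContDiff.add hf hg

theorem Sm.sub {f g : (Fin m → ℝ) → ℝ} (hf : Sm f) (hg : Sm g) :
    Sm (fun y => f y - g y) := ContDiff.sub hf hg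

theorem Sm.mul {f g : (Fin m → ℝ) → ℝ} (hf : Sm f) (hg : Sm g) :
    Sm (fun y => f y * g y) := ContDiff.mul hf hg

theorem Sm.const (c : ℝ) : Sm (fun _ : Fin m → ℝ => c) := contDiff_const

theorem Sm.coord (k : Fin m) : Sm (fun y : Fin m → ℝ => y k) :=
  (ContinuousLinearMap.proj k : (Fin m → ℝ) →L[ℝ] ℝ).contDiff

theorem Sm.sum {s : Finset (Fin m)} {F : Fin m → (Fin m → ℝ) → ℝ}
    (h : ∀ k ∈ s, Sm (F k)) : Sm (fun y => ∑ k ∈ s, F k y) :=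
  ContDiff.sum h

theorem pd_eq_Dv {i : Fin m} {f : (Fin m → ℝ) → ℝ} (hf : Sm f) (x : Fin m → ℝ) :
    pd i f x = Dv (e i) f x := by
  have h1 : (fun t : ℝ => f (Function.update x i t))
      = fun t => f (x + (t - x i) • e i) := by
    funext t; congr 1; funext k
    rcases eq_or_ne k i with rfl | hk
    · simp [e]
    · simp [e, Function.update_of_ne hk, Pi.single_apply, hk]
  have hc : HasDerivAt (fun t : ℝ => x + (t - x i) • e i)
      (e i) (x i) := by
    have := ((hasDerivAt_id (x i)).sub_const (x i)).smul_const (e i)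
    simpa using this.const_add x
  have hfd : HasFDerivAt f (fderiv ℝ f x) (x + (x i - x i) • e i) := by
    simpa using (hf.diffAt x).hasFDerivAt
  have hcomp := hfd.comp_hasDerivAt (x i) hc
  rw [pd, h1]
  exact hcomp.deriv

theorem Dv_add {v : Fin m → ℝ} {f g : (Fin m → ℝ) → ℝ} (hf : Sm f) (hg : Sm g)
    (x : Fin m → ℝ) :
    Dv v (fun y => f y + g y) x = Dv v f x + Dv v g x := by
  unfold Dv; rw [fderiv_fun_add (hf.diffAt x) (hg.diffAt x)]; rfl

theorem Dv_sub {v : Fin m → ℝ} {f g : (Fin m → ℝ) → ℝ} (hf : Sm f) (hg : Sm g)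
    (x : Fin m → ℝ) :
    Dv v (fun y => f y - g y) x = Dv v f x - Dv v g x := by
  unfold Dv; rw [fderiv_fun_sub (hf.diffAt x) (hg.diffAt x)]; rfl

theorem Dv_mul {v : Fin m → ℝ} {f g : (Fin m → ℝ) → ℝ} (hf : Sm f) (hg : Sm g)
    (x : Fin m → ℝ) :
    Dv v (fun y => f y * g y) x = Dv v f x * g x + f x * Dv v g x := by
  unfold Dv; rw [fderiv_fun_mul (hf.diffAt x) (hg.diffAt x)]
  simp; ring

theorem Dv_const {v : Fin m → ℝ} (c : ℝ) (x : Fin m → ℝ) :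
    Dv v (fun _ => c) x = 0 := by
  unfold Dv; rw [fderiv_fun_const]; simp

theorem Dv_sum {v : Fin m → ℝ} {s : Finset (Fin m)} {F : Fin m → (Fin m → ℝ) → ℝ}
    (h : ∀ k ∈ s, Sm (F k)) (x : Fin m → ℝ) :
    Dv v (fun y => ∑ k ∈ s, F k y) x = ∑ k ∈ s, Dv v (F k) x := by
  unfold Dv; rw [fderiv_fun_sum (fun k hk => (h k hk).diffAt x)]; simp

theorem Dv_coord {v : Fin m → ℝ} (k : Fin m) (x : Fin m → ℝ) :
    Dv v (fun y => y k) x = v k := by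
  have h : (fun y : Fin m → ℝ => y k) = (ContinuousLinearMap.proj k : (Fin m → ℝ) →L[ℝ] ℝ) := rfl
  unfold Dv; rw [h, ContinuousLinearMap.fderiv]; rfl

theorem Dv_vsub {v w : Fin m → ℝ} (f : (Fin m → ℝ) → ℝ) (x : Fin m → ℝ) :
    Dv (v - w) f x = Dv v f x - Dv w f x := by
  unfold Dv; exact map_sub (fderiv ℝ f x) v w

theorem Dv_vadd {v w : Fin m → ℝ} (f : (Fin m → ℝ) → ℝ) (x : Fin m → ℝ) :
    Dv (v + w) f x = Dv v f x + Dv w f x := by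
  unfold Dv; exact map_add (fderiv ℝ f x) v w

theorem Dv_decompose (v : Fin m → ℝ) (f : (Fin m → ℝ) → ℝ) (x : Fin m → ℝ) :
    Dv v f x = ∑ k, v k * Dv (e k) f x := by
  have h : v = ∑ k, v k • e k := by
    funext l
    simp [e, Finset.sum_apply, Pi.single_apply]
  calc fderiv ℝ f x v = fderiv ℝ f x (∑ k, v k • e k) := by rw [← h]
    _ = ∑ k, v k * fderiv ℝ f x (e k) := by
        rw [map_sum]
        exact Finset.sum_congr rfl (fun k _ => by rw [map_smul, smul_eq_mul])

theorem Dv_comm {v w : Fin m → ℝ} {f : (Fin m → ℝ) → ℝ} (hf : Sm f) (x : Fin m → ℝ) :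
    Dv v (Dv w f) x = Dv w (Dv v f) x := by
  have hd : DifferentiableAt ℝ (fderiv ℝ f) x :=
    ((hf.fderiv_right topaddle).differentiable (by simp)) x
  have key : ∀ a b : Fin m → ℝ, Dv a (Dv b f) x = fderiv ℝ (fderiv ℝ f) x a b := by
    intro a b
    unfold Dv
    rw [fderiv_clm_apply hd (differentiableAt_const b)]
    simp
  rw [key, key]
  have hsymm : IsSymmSndFDerivAt ℝ f x :=
    (hf.contDiffAt).isSymmSndFDerivAt (by simp only [minSmoothness_of_isRCLikeNormedField]; exact WithTop.coe_le_coe.mpr (le_top : (2 : ℕ∞) ≤ ⊤))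
  exact hsymm v w

section sums
open Finset

variable {m : ℕ}

theorem sum_Ioi_swap (t : Fin m → Fin m → ℝ) :
    ∑ k, ∑ l ∈ Ioi k, t k l = ∑ k, ∑ l ∈ Iio k, t l k := by
  rw [Finset.sum_sigma', Finset.sum_sigma']
  refine Finset.sum_nbij' (fun p => ⟨p.2, p.1⟩) (fun p => ⟨p.2, p.1⟩) ?_ ?_ ?_ ?_ ?_ <;>
    simp

theorem row_split (t : Fin m → Fin m → ℝ) (k : Fin m) :
    ∑ l, t k l = ∑ l ∈ Ioi k, t k l + ∑ l ∈ Iio k, t k l + t k k := by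
  have hIoi : Ioi k = univ.filter (fun l => k < l) := by ext l; simp
  have hIio : Iio k = univ.filter (fun l => l < k) := by ext l; simp
  have hk : t k k = ∑ l, if l = k then t k l else 0 := by
    rw [Finset.sum_ite_eq' univ k (t k)]; simp
  rw [hIoi, hIio, Finset.sum_filter, Finset.sum_filter, hk,
    ← Finset.sum_add_distrib, ← Finset.sum_add_distrib]
  refine Finset.sum_congr rfl fun l _ => ?_
  rcases lt_trichotomy l k with h | h | h
  · simp [h, not_lt.mpr h.le, h.ne, lt_irrefl]
  · simp [h]
  · simp [h, not_lt.mpr h.le, h.ne', lt_irrefl]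

theorem sym_sum (t : Fin m → Fin m → ℝ) (hsym : ∀ k l, t k l = t l k) :
    2 * (∑ k, ∑ l ∈ Ioi k, t k l) = ∑ k, ∑ l, t k l - ∑ k, t k k := by
  have h : ∑ k, ∑ l, t k l
      = ∑ k, ∑ l ∈ Ioi k, t k l + ∑ k, ∑ l ∈ Iio k, t k l + ∑ k, t k k := by
    rw [← Finset.sum_add_distrib, ← Finset.sum_add_distrib]
    exact Finset.sum_congr rfl fun k _ => row_split t k
  have h2 : ∑ k, ∑ l ∈ Iio k, t k l = ∑ k, ∑ l ∈ Ioi k, t k l := by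
    rw [sum_Ioi_swap]
    exact Finset.sum_congr rfl fun k _ => Finset.sum_congr rfl fun l _ => hsym k l
  rw [h, h2]; ring

end sums

/-! ### Operator layer -/

/-- Euler-type operator `Θ f = ∑ xₖ ∂ₖ f`. -/
noncomputable def Th (f : (Fin m → ℝ) → ℝ) (x : Fin m → ℝ) : ℝ :=
  ∑ k, x k * Dv (e k) f x

theorem Sm.th {f : (Fin m → ℝ) → ℝ} (hf : Sm f) : Sm (Th f) :=
  Sm.sum fun k _ => (Sm.coord k).mul (hf.dv (e k))

/-- `M2` is the Appell–Lauricella operator with the cross term symmetrized. -/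
noncomputable def M2 (c : Fin m → ℝ) (B : ℝ) (f : (Fin m → ℝ) → ℝ) (x : Fin m → ℝ) : ℝ :=
  ∑ k, (1 - x k) * x k * Dv (e k) (Dv (e k) f) x
    - (∑ k, ∑ l, x k * x l * Dv (e k) (Dv (e l) f) x
        - ∑ k, x k * x k * Dv (e k) (Dv (e k) f) x)
    + ∑ k, (c k - B * x k) * Dv (e k) f x

theorem Sm.m2 {f : (Fin m → ℝ) → ℝ} (hf : Sm f) (c : Fin m → ℝ) (B : ℝ) :
    Sm (M2 c B f) := by
  have h1 : Sm (fun y : Fin m → ℝ => ∑ k, (1 - y k) * y k * Dv (e k) (Dv (e k) f) y) :=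
    Sm.sum fun k _ => (((Sm.const 1).sub (Sm.coord k)).mul (Sm.coord k)).mul
      ((hf.dv (e k)).dv (e k))
  have h2 : Sm (fun y : Fin m → ℝ => ∑ k, ∑ l, y k * y l * Dv (e k) (Dv (e l) f) y) :=
    Sm.sum fun k _ => Sm.sum fun l _ =>
      ((Sm.coord k).mul (Sm.coord l)).mul ((hf.dv (e l)).dv (e k))
  have h3 : Sm (fun y : Fin m → ℝ => ∑ k, y k * y k * Dv (e k) (Dv (e k) f) y) :=
    Sm.sum fun k _ => ((Sm.coord k).mul (Sm.coord k)).mul ((hf.dv (e k)).dv (e k))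
  have h4 : Sm (fun y : Fin m → ℝ => ∑ k, (c k - B * y k) * Dv (e k) f y) :=
    Sm.sum fun k _ => ((Sm.const (c k)).sub ((Sm.const B).mul (Sm.coord k))).mul (hf.dv (e k))
  exact (h1.sub (h2.sub h3)).add h4

theorem Dv_const_mul {v : Fin m → ℝ} {g : (Fin m → ℝ) → ℝ} (hg : Sm g) (a : ℝ)
    (x : Fin m → ℝ) : Dv v (fun y => a * g y) x = a * Dv v g x := by
  rw [Dv_mul (Sm.const a) hg x, Dv_const]; ring

theorem Dv3_comm {v a b : Fin m → ℝ} {f : (Fin m → ℝ) → ℝ} (hf : Sm f) (x : Fin m → ℝ) :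
    Dv v (Dv a (Dv b f)) x = Dv a (Dv b (Dv v f)) x := by
  rw [Dv_comm (hf.dv b) x,
    show Dv v (Dv b f) = Dv b (Dv v f) from funext fun y => Dv_comm hf y]

theorem Th_comm {v : Fin m → ℝ} {f : (Fin m → ℝ) → ℝ} (hf : Sm f) (x : Fin m → ℝ) :
    Dv v (Th f) x = Dv v f x + Th (Dv v f) x := by
  have h0 : Th f = fun y => ∑ k, y k * Dv (e k) f y := rfl
  rw [h0, Dv_sum (fun k _ => (Sm.coord k).mul (hf.dv (e k))) x]
  have h1 : ∀ k : Fin m, Dv v (fun y => y k * Dv (e k) f y) x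
      = v k * Dv (e k) f x + x k * Dv (e k) (Dv v f) x := by
    intro k
    rw [Dv_mul (Sm.coord k) (hf.dv (e k)) x, Dv_coord, Dv_comm hf x]
  rw [Finset.sum_congr rfl fun k _ => h1 k, Finset.sum_add_distrib, ← Dv_decompose]
  rfl

theorem M2_add {f g : (Fin m → ℝ) → ℝ} (hf : Sm f) (hg : Sm g) (c : Fin m → ℝ) (B : ℝ)
    (x : Fin m → ℝ) :
    M2 c B (fun y => f y + g y) x = M2 c B f x + M2 c B g x := by
  have hDv : ∀ a b : Fin m → ℝ, ∀ z, Dv a (Dv b (fun y => f y + g y)) z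
      = Dv a (Dv b f) z + Dv a (Dv b g) z := by
    intro a b z
    rw [show Dv b (fun y => f y + g y) = fun y => Dv b f y + Dv b g y from
      funext fun y => Dv_add hf hg y, Dv_add (hf.dv b) (hg.dv b) z]
  have hDv1 : ∀ b : Fin m → ℝ, ∀ z, Dv b (fun y => f y + g y) z = Dv b f z + Dv b g z :=
    fun b z => Dv_add hf hg z
  unfold M2
  simp only [hDv, hDv1]
  simp only [mul_add, Finset.sum_add_distrib]
  ring

/-! ### Commutation of a directional derivative with `M2` -/

theorem dvA1 {f : (Fin m → ℝ) → ℝ} (hf : Sm f) (v x : Fin m → ℝ) :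
    Dv v (fun y => ∑ k, (1 - y k) * y k * Dv (e k) (Dv (e k) f) y) x
      = ∑ k, v k * (1 - 2 * x k) * Dv (e k) (Dv (e k) f) x
        + ∑ k, (1 - x k) * x k * Dv (e k) (Dv (e k) (Dv v f)) x := by
  rw [Dv_sum (fun k _ => (((Sm.const 1).sub (Sm.coord k)).mul (Sm.coord k)).mul
      ((hf.dv (e k)).dv (e k))) x, ← Finset.sum_add_distrib]
  refine Finset.sum_congr rfl fun k _ => ?_
  rw [Dv_mul (((Sm.const 1).sub (Sm.coord k)).mul (Sm.coord k)) ((hf.dv (e k)).dv (e k)) x,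
    Dv_mul ((Sm.const 1).sub (Sm.coord k)) (Sm.coord k) x,
    Dv_sub (Sm.const 1) (Sm.coord k) x, Dv_const, Dv_coord, Dv3_comm hf x]
  ring

theorem dvFull {f : (Fin m → ℝ) → ℝ} (hf : Sm f) (v x : Fin m → ℝ) :
    Dv v (fun y => ∑ k, ∑ l, y k * y l * Dv (e k) (Dv (e l) f) y) x
      = ∑ k, ∑ l, v k * x l * Dv (e k) (Dv (e l) f) x
        + ∑ k, ∑ l, x k * v l * Dv (e k) (Dv (e l) f) x
        + ∑ k, ∑ l, x k * x l * Dv (e k) (Dv (e l) (Dv v f)) x := by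
  rw [Dv_sum (fun k _ => Sm.sum fun l _ => ((Sm.coord k).mul (Sm.coord l)).mul
      ((hf.dv (e l)).dv (e k))) x]
  have h1 : ∀ k : Fin m, Dv v (fun y => ∑ l, y k * y l * Dv (e k) (Dv (e l) f) y) x
      = ∑ l, (v k * x l * Dv (e k) (Dv (e l) f) x
          + x k * v l * Dv (e k) (Dv (e l) f) x
          + x k * x l * Dv (e k) (Dv (e l) (Dv v f)) x) := by
    intro k
    rw [Dv_sum (fun l _ => ((Sm.coord k).mul (Sm.coord l)).mul ((hf.dv (e l)).dv (e k))) x]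
    refine Finset.sum_congr rfl fun l _ => ?_
    rw [Dv_mul ((Sm.coord k).mul (Sm.coord l)) ((hf.dv (e l)).dv (e k)) x,
      Dv_mul (Sm.coord k) (Sm.coord l) x, Dv_coord, Dv_coord, Dv3_comm hf x]
    ring
  simp only [h1, Finset.sum_add_distrib]

theorem dvDiag {f : (Fin m → ℝ) → ℝ} (hf : Sm f) (v x : Fin m → ℝ) :
    Dv v (fun y => ∑ k, y k * y k * Dv (e k) (Dv (e k) f) y) x
      = 2 * ∑ k, x k * v k * Dv (e k) (Dv (e k) f) x
        + ∑ k, x k * x k * Dv (e k) (Dv (e k) (Dv v f)) x := by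
  rw [Dv_sum (fun k _ => ((Sm.coord k).mul (Sm.coord k)).mul ((hf.dv (e k)).dv (e k))) x]
  have h1 : ∀ k : Fin m, Dv v (fun y => y k * y k * Dv (e k) (Dv (e k) f) y) x
      = 2 * (x k * v k * Dv (e k) (Dv (e k) f) x)
        + x k * x k * Dv (e k) (Dv (e k) (Dv v f)) x := by
    intro k
    rw [Dv_mul ((Sm.coord k).mul (Sm.coord k)) ((hf.dv (e k)).dv (e k)) x,
      Dv_mul (Sm.coord k) (Sm.coord k) x, Dv_coord, Dv3_comm hf x]
    ring
  rw [Finset.mul_sum]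
  simp only [h1, Finset.sum_add_distrib]

theorem dvA3 {f : (Fin m → ℝ) → ℝ} (c : Fin m → ℝ) (B : ℝ) (hf : Sm f) (v x : Fin m → ℝ) :
    Dv v (fun y => ∑ k, (c k - B * y k) * Dv (e k) f y) x
      = -(B * Dv v f x) + ∑ k, (c k - B * x k) * Dv (e k) (Dv v f) x := by
  rw [Dv_sum (fun k _ => ((Sm.const (c k)).sub ((Sm.const B).mul (Sm.coord k))).mul
      (hf.dv (e k))) x]
  have h1 : ∀ k : Fin m, Dv v (fun y => (c k - B * y k) * Dv (e k) f y) x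
      = -(B * (v k * Dv (e k) f x)) + (c k - B * x k) * Dv (e k) (Dv v f) x := by
    intro k
    rw [Dv_mul ((Sm.const (c k)).sub ((Sm.const B).mul (Sm.coord k))) (hf.dv (e k)) x,
      Dv_sub (Sm.const (c k)) ((Sm.const B).mul (Sm.coord k)) x, Dv_const,
      Dv_mul (Sm.const B) (Sm.coord k) x, Dv_const, Dv_coord, Dv_comm hf x]
    ring
  simp only [h1, Finset.sum_add_distrib]
  have h2 : ∑ k, -(B * (v k * Dv (e k) f x)) = -(B * Dv v f x) := by
    rw [Dv_decompose v f x, Finset.mul_sum]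
    simp only [Finset.sum_neg_distrib]
  rw [h2]

theorem cross_eq {f : (Fin m → ℝ) → ℝ} (hf : Sm f) (v x : Fin m → ℝ) :
    ∑ k, ∑ l, x k * v l * Dv (e k) (Dv (e l) f) x
      = ∑ k, ∑ l, v k * x l * Dv (e k) (Dv (e l) f) x := by
  rw [Finset.sum_comm]
  exact Finset.sum_congr rfl fun l _ => Finset.sum_congr rfl fun k _ => by
    rw [Dv_comm hf x]; ring

theorem cross_Th {f : (Fin m → ℝ) → ℝ} (hf : Sm f) (v x : Fin m → ℝ) :
    ∑ k, ∑ l, v k * x l * Dv (e k) (Dv (e l) f) x = Dv v (Th f) x - Dv v f x := by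
  have h1 : ∀ k : Fin m, ∑ l, v k * x l * Dv (e k) (Dv (e l) f) x
      = v k * Th (Dv (e k) f) x := by
    intro k
    rw [show Th (Dv (e k) f) x = ∑ l, x l * Dv (e l) (Dv (e k) f) x from rfl, Finset.mul_sum]
    exact Finset.sum_congr rfl fun l _ => by rw [Dv_comm hf x]; ring
  have h2 : ∀ k : Fin m, v k * Th (Dv (e k) f) x
      = v k * Dv (e k) (Th f) x - v k * Dv (e k) f x := by
    intro k; rw [Th_comm hf x]; ring
  simp only [h1, h2, Finset.sum_sub_distrib]
  rw [← Dv_decompose, ← Dv_decompose]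

theorem lemA {c : Fin m → ℝ} {B : ℝ} {f : (Fin m → ℝ) → ℝ} (hf : Sm f) (v x : Fin m → ℝ) :
    Dv v (M2 c B f) x
      = M2 c B (Dv v f) x + ∑ k, v k * Dv (e k) (Dv (e k) f) x
        - 2 * (Dv v (Th f) x - Dv v f x) - B * Dv v f x := by
  have s1 : Sm (fun y : Fin m → ℝ => ∑ k, (1 - y k) * y k * Dv (e k) (Dv (e k) f) y) :=
    Sm.sum fun k _ => (((Sm.const 1).sub (Sm.coord k)).mul (Sm.coord k)).mul
      ((hf.dv (e k)).dv (e k))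
  have s2 : Sm (fun y : Fin m → ℝ => ∑ k, ∑ l, y k * y l * Dv (e k) (Dv (e l) f) y) :=
    Sm.sum fun k _ => Sm.sum fun l _ =>
      ((Sm.coord k).mul (Sm.coord l)).mul ((hf.dv (e l)).dv (e k))
  have s3 : Sm (fun y : Fin m → ℝ => ∑ k, y k * y k * Dv (e k) (Dv (e k) f) y) :=
    Sm.sum fun k _ => ((Sm.coord k).mul (Sm.coord k)).mul ((hf.dv (e k)).dv (e k))
  have s4 : Sm (fun y : Fin m → ℝ => ∑ k, (c k - B * y k) * Dv (e k) f y) :=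
    Sm.sum fun k _ => ((Sm.const (c k)).sub ((Sm.const B).mul (Sm.coord k))).mul (hf.dv (e k))
  have hM : M2 c B f = fun y =>
      (∑ k, (1 - y k) * y k * Dv (e k) (Dv (e k) f) y
        - (∑ k, ∑ l, y k * y l * Dv (e k) (Dv (e l) f) y
            - ∑ k, y k * y k * Dv (e k) (Dv (e k) f) y))
      + ∑ k, (c k - B * y k) * Dv (e k) f y := rfl
  rw [hM, Dv_add (s1.sub (s2.sub s3)) s4 x, Dv_sub s1 (s2.sub s3) x, Dv_sub s2 s3 x,
    dvA1 hf v x, dvFull hf v x, dvDiag hf v x, dvA3 c B hf v x, cross_eq hf v x,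
    cross_Th hf v x]
  have hcomb : ∑ k, v k * (1 - 2 * x k) * Dv (e k) (Dv (e k) f) x
      = ∑ k, v k * Dv (e k) (Dv (e k) f) x
        - 2 * ∑ k, x k * v k * Dv (e k) (Dv (e k) f) x := by
    rw [Finset.mul_sum, ← Finset.sum_sub_distrib]
    exact Finset.sum_congr rfl fun k _ => by ring
  rw [hcomb]
  simp only [M2]
  ring

/-! ### Product expansions -/

theorem sum_e (i : Fin m) (F : Fin m → ℝ) : ∑ k, e k i * F k = F i := by
  simp [e, Pi.single_apply, ite_mul]

theorem sum_split3 {i j : Fin m} (F G H : Fin m → ℝ) :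
    ∑ k, (e k i * F k + e k j * G k + H k) = F i + G j + ∑ k, H k := by
  rw [Finset.sum_add_distrib, Finset.sum_add_distrib, sum_e, sum_e]

theorem DD_mul {u g : (Fin m → ℝ) → ℝ} (hu : Sm u) (hg : Sm g) (a b x : Fin m → ℝ) :
    Dv a (Dv b (fun y => u y * g y)) x
      = Dv a (Dv b u) x * g x + Dv b u x * Dv a g x + Dv a u x * Dv b g x
        + u x * Dv a (Dv b g) x := by
  rw [show (Dv b fun y => u y * g y) = fun y => Dv b u y * g y + u y * Dv b g y from
      funext fun y => Dv_mul hu hg y,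
    Dv_add ((hu.dv b).mul hg) (hu.mul (hg.dv b)) x,
    Dv_mul (hu.dv b) hg x, Dv_mul hu (hg.dv b) x]
  ring

theorem Dv_P (i j : Fin m) (v x : Fin m → ℝ) :
    Dv v (fun y => y i * y j) x = v i * x j + x i * v j := by
  rw [Dv_mul (Sm.coord i) (Sm.coord j) x, Dv_coord, Dv_coord]

theorem DD_P (i j : Fin m) (a b x : Fin m → ℝ) :
    Dv a (Dv b (fun y => y i * y j)) x = b i * a j + a i * b j := by
  rw [show (Dv b fun y => y i * y j) = fun y => b i * y j + y i * b j from
      funext fun y => Dv_P i j b y,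
    Dv_add ((Sm.const (b i)).mul (Sm.coord j)) ((Sm.coord i).mul (Sm.const (b j))) x,
    Dv_mul (Sm.const (b i)) (Sm.coord j) x, Dv_mul (Sm.coord i) (Sm.const (b j)) x,
    Dv_const, Dv_const, Dv_coord, Dv_coord]
  ring

theorem Dv_Q (i j : Fin m) (ci cj : ℝ) (v x : Fin m → ℝ) :
    Dv v (fun y => ci * y j - cj * y i) x = ci * v j - cj * v i := by
  rw [Dv_sub ((Sm.const ci).mul (Sm.coord j)) ((Sm.const cj).mul (Sm.coord i)) x,
    Dv_mul (Sm.const ci) (Sm.coord j) x, Dv_mul (Sm.const cj) (Sm.coord i) x,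
    Dv_const, Dv_const, Dv_coord, Dv_coord]
  ring

theorem DD_Q (i j : Fin m) (ci cj : ℝ) (a b x : Fin m → ℝ) :
    Dv a (Dv b (fun y => ci * y j - cj * y i)) x = 0 := by
  rw [show (Dv b fun y => ci * y j - cj * y i) = fun _ => ci * b j - cj * b i from
      funext fun y => Dv_Q i j ci cj b y,
    Dv_const]

theorem pull_sq {g : (Fin m → ℝ) → ℝ} (x : Fin m → ℝ) :
    ∑ k, x k * ∑ l, x l * Dv (e k) (Dv (e l) g) x
      = ∑ k, ∑ l, x k * x l * Dv (e k) (Dv (e l) g) x :=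
  Finset.sum_congr rfl fun k _ => by
    rw [Finset.mul_sum]; exact Finset.sum_congr rfl fun l _ => by ring

theorem lemB1 {g : (Fin m → ℝ) → ℝ} (hg : Sm g) {i j : Fin m} (hij : i ≠ j)
    (c : Fin m → ℝ) (B : ℝ) (x : Fin m → ℝ) :
    M2 c B (fun y => y i * y j * g y) x
      = x i * x j * M2 c B g x
        + (c i * x j + c j * x i - 2 * (x i * x j) - 2 * B * (x i * x j)) * g x
        + 2 * (x i * x j) * (Dv (e i) g x + Dv (e j) g x)
        - 4 * (x i * x j) * Th g x := by
  have hu : Sm (fun y : Fin m → ℝ => y i * y j) := (Sm.coord i).mul (Sm.coord j)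
  have eij : e i j = 0 := Pi.single_eq_of_ne hij.symm 1
  have eji : e j i = 0 := Pi.single_eq_of_ne hij 1
  -- A1 block
  have h1 : ∀ k : Fin m, (1 - x k) * x k * Dv (e k) (Dv (e k) (fun y => y i * y j * g y)) x
      = e k i * ((1 - x k) * x k * (2 * e k j * g x + 2 * x j * Dv (e k) g x))
        + e k j * ((1 - x k) * x k * (2 * x i * Dv (e k) g x))
        + (x i * x j) * ((1 - x k) * x k * Dv (e k) (Dv (e k) g) x) := fun k => by
    rw [DD_mul hu hg, DD_P, Dv_P]; ring
  have b1 : ∑ k, (1 - x k) * x k * Dv (e k) (Dv (e k) (fun y => y i * y j * g y)) x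
      = (1 - x i) * x i * (2 * e i j * g x + 2 * x j * Dv (e i) g x)
        + (1 - x j) * x j * (2 * x i * Dv (e j) g x)
        + x i * x j * ∑ k, (1 - x k) * x k * Dv (e k) (Dv (e k) g) x := by
    rw [Finset.sum_congr rfl fun k _ => h1 k, sum_split3, ← Finset.mul_sum]
  -- Full block
  have h2 : ∀ k l : Fin m, x k * x l * Dv (e k) (Dv (e l) (fun y => y i * y j * g y)) x
      = e l i * (x k * x l * (e k j * g x + x j * Dv (e k) g x))
        + e l j * (x k * x l * (e k i * g x + x i * Dv (e k) g x))
        + ((e k i * x j + x i * e k j) * x k * (x l * Dv (e l) g x)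
            + x i * x j * x k * (x l * Dv (e k) (Dv (e l) g) x)) := fun k l => by
    rw [DD_mul hu hg, DD_P, Dv_P, Dv_P]; ring
  have h3 : ∀ k : Fin m, ∑ l, x k * x l * Dv (e k) (Dv (e l) (fun y => y i * y j * g y)) x
      = e k i * (x k * x j * g x + x j * x k * ∑ l, x l * Dv (e l) g x)
        + e k j * (x k * x i * g x + x i * x k * ∑ l, x l * Dv (e l) g x)
        + (2 * (x i * x j) * (x k * Dv (e k) g x)
            + x i * x j * (x k * ∑ l, x l * Dv (e k) (Dv (e l) g) x)) := fun k => by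
    rw [Finset.sum_congr rfl fun l _ => h2 k l, sum_split3, Finset.sum_add_distrib,
      ← Finset.mul_sum, ← Finset.mul_sum]
    ring
  have b2 : ∑ k, ∑ l, x k * x l * Dv (e k) (Dv (e l) (fun y => y i * y j * g y)) x
      = 2 * (x i * x j) * g x + 4 * (x i * x j) * Th g x
        + x i * x j * ∑ k, ∑ l, x k * x l * Dv (e k) (Dv (e l) g) x := by
    rw [Finset.sum_congr rfl fun k _ => h3 k, sum_split3, Finset.sum_add_distrib,
      ← Finset.mul_sum, ← Finset.mul_sum, pull_sq,
      show Th g x = ∑ l, x l * Dv (e l) g x from rfl]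
    have hth : ∑ k, x k * Dv (e k) g x = ∑ l, x l * Dv (e l) g x := rfl
    rw [hth]; ring
  -- Diag block
  have h5 : ∀ k : Fin m, x k * x k * Dv (e k) (Dv (e k) (fun y => y i * y j * g y)) x
      = e k i * (x k * x k * (2 * e k j * g x + 2 * x j * Dv (e k) g x))
        + e k j * (x k * x k * (2 * x i * Dv (e k) g x))
        + (x i * x j) * (x k * x k * Dv (e k) (Dv (e k) g) x) := fun k => by
    rw [DD_mul hu hg, DD_P, Dv_P]; ring
  have b3 : ∑ k, x k * x k * Dv (e k) (Dv (e k) (fun y => y i * y j * g y)) x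
      = x i * x i * (2 * e i j * g x + 2 * x j * Dv (e i) g x)
        + x j * x j * (2 * x i * Dv (e j) g x)
        + x i * x j * ∑ k, x k * x k * Dv (e k) (Dv (e k) g) x := by
    rw [Finset.sum_congr rfl fun k _ => h5 k, sum_split3, ← Finset.mul_sum]
  -- A3 block
  have h6 : ∀ k : Fin m, (c k - B * x k) * Dv (e k) (fun y => y i * y j * g y) x
      = e k i * ((c k - B * x k) * x j * g x) + e k j * ((c k - B * x k) * x i * g x)
        + (x i * x j) * ((c k - B * x k) * Dv (e k) g x) := fun k => by
    rw [Dv_mul hu hg, Dv_P]; ring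
  have b4 : ∑ k, (c k - B * x k) * Dv (e k) (fun y => y i * y j * g y) x
      = (c i - B * x i) * x j * g x + (c j - B * x j) * x i * g x
        + x i * x j * ∑ k, (c k - B * x k) * Dv (e k) g x := by
    rw [Finset.sum_congr rfl fun k _ => h6 k, sum_split3, ← Finset.mul_sum]
  simp only [M2]
  rw [b1, b2, b3, b4, eij,
    show Th g x = ∑ l, x l * Dv (e l) g x from rfl]
  ring

theorem lemB2 {g : (Fin m → ℝ) → ℝ} (hg : Sm g) (i j : Fin m)
    (c : Fin m → ℝ) (B : ℝ) (x : Fin m → ℝ) :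
    M2 c B (fun y => (c i * y j - c j * y i) * g y) x
      = (c i * x j - c j * x i) * M2 c B g x - B * (c i * x j - c j * x i) * g x
        + 2 * c i * x j * Dv (e j) g x - 2 * c j * x i * Dv (e i) g x
        - 2 * (c i * x j - c j * x i) * Th g x := by
  have hu : Sm (fun y : Fin m → ℝ => c i * y j - c j * y i) :=
    ((Sm.const (c i)).mul (Sm.coord j)).sub ((Sm.const (c j)).mul (Sm.coord i))
  -- A1 block
  have h1 : ∀ k : Fin m,
      (1 - x k) * x k * Dv (e k) (Dv (e k) (fun y => (c i * y j - c j * y i) * g y)) x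
      = e k i * ((1 - x k) * x k * (-(2 * c j * Dv (e k) g x)))
        + e k j * ((1 - x k) * x k * (2 * c i * Dv (e k) g x))
        + (c i * x j - c j * x i) * ((1 - x k) * x k * Dv (e k) (Dv (e k) g) x) := fun k => by
    rw [DD_mul hu hg, DD_Q, Dv_Q]; ring
  have b1 : ∑ k, (1 - x k) * x k * Dv (e k) (Dv (e k) (fun y => (c i * y j - c j * y i) * g y)) x
      = (1 - x i) * x i * (-(2 * c j * Dv (e i) g x))
        + (1 - x j) * x j * (2 * c i * Dv (e j) g x)
        + (c i * x j - c j * x i) * ∑ k, (1 - x k) * x k * Dv (e k) (Dv (e k) g) x := by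
    rw [Finset.sum_congr rfl fun k _ => h1 k, sum_split3, ← Finset.mul_sum]
  -- Full block
  have h2 : ∀ k l : Fin m,
      x k * x l * Dv (e k) (Dv (e l) (fun y => (c i * y j - c j * y i) * g y)) x
      = e l i * (x k * x l * (-(c j * Dv (e k) g x)))
        + e l j * (x k * x l * (c i * Dv (e k) g x))
        + ((c i * e k j - c j * e k i) * x k * (x l * Dv (e l) g x)
            + (c i * x j - c j * x i) * x k * (x l * Dv (e k) (Dv (e l) g) x)) := fun k l => by
    rw [DD_mul hu hg, DD_Q, Dv_Q, Dv_Q]; ring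
  have h3 : ∀ k : Fin m,
      ∑ l, x k * x l * Dv (e k) (Dv (e l) (fun y => (c i * y j - c j * y i) * g y)) x
      = e k i * (-(c j * x k * ∑ l, x l * Dv (e l) g x))
        + e k j * (c i * x k * ∑ l, x l * Dv (e l) g x)
        + ((c i * x j - c j * x i) * (x k * Dv (e k) g x)
            + (c i * x j - c j * x i) * (x k * ∑ l, x l * Dv (e k) (Dv (e l) g) x)) := fun k => by
    rw [Finset.sum_congr rfl fun l _ => h2 k l, sum_split3, Finset.sum_add_distrib,
      ← Finset.mul_sum, ← Finset.mul_sum]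
    ring
  have b2 : ∑ k, ∑ l, x k * x l * Dv (e k) (Dv (e l) (fun y => (c i * y j - c j * y i) * g y)) x
      = 2 * (c i * x j - c j * x i) * Th g x
        + (c i * x j - c j * x i) * ∑ k, ∑ l, x k * x l * Dv (e k) (Dv (e l) g) x := by
    rw [Finset.sum_congr rfl fun k _ => h3 k, sum_split3, Finset.sum_add_distrib,
      ← Finset.mul_sum, ← Finset.mul_sum, pull_sq,
      show Th g x = ∑ l, x l * Dv (e l) g x from rfl]
    have hth : ∑ k, x k * Dv (e k) g x = ∑ l, x l * Dv (e l) g x := rfl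
    rw [hth]; ring
  -- Diag block
  have h5 : ∀ k : Fin m,
      x k * x k * Dv (e k) (Dv (e k) (fun y => (c i * y j - c j * y i) * g y)) x
      = e k i * (x k * x k * (-(2 * c j * Dv (e k) g x)))
        + e k j * (x k * x k * (2 * c i * Dv (e k) g x))
        + (c i * x j - c j * x i) * (x k * x k * Dv (e k) (Dv (e k) g) x) := fun k => by
    rw [DD_mul hu hg, DD_Q, Dv_Q]; ring
  have b3 : ∑ k, x k * x k * Dv (e k) (Dv (e k) (fun y => (c i * y j - c j * y i) * g y)) x
      = x i * x i * (-(2 * c j * Dv (e i) g x))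
        + x j * x j * (2 * c i * Dv (e j) g x)
        + (c i * x j - c j * x i) * ∑ k, x k * x k * Dv (e k) (Dv (e k) g) x := by
    rw [Finset.sum_congr rfl fun k _ => h5 k, sum_split3, ← Finset.mul_sum]
  -- A3 block
  have h6 : ∀ k : Fin m,
      (c k - B * x k) * Dv (e k) (fun y => (c i * y j - c j * y i) * g y) x
      = e k i * (-((c k - B * x k) * c j * g x)) + e k j * ((c k - B * x k) * c i * g x)
        + (c i * x j - c j * x i) * ((c k - B * x k) * Dv (e k) g x) := fun k => by
    rw [Dv_mul hu hg, Dv_Q]; ring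
  have b4 : ∑ k, (c k - B * x k) * Dv (e k) (fun y => (c i * y j - c j * y i) * g y) x
      = -((c i - B * x i) * c j * g x) + (c j - B * x j) * c i * g x
        + (c i * x j - c j * x i) * ∑ k, (c k - B * x k) * Dv (e k) g x := by
    rw [Finset.sum_congr rfl fun k _ => h6 k, sum_split3, ← Finset.mul_sum]
  simp only [M2]
  rw [b1, b2, b3, b4, show Th g x = ∑ l, x l * Dv (e l) g x from rfl]
  set S1 := ∑ k, (1 - x k) * x k * Dv (e k) (Dv (e k) g) x
  set S2 := ∑ k, ∑ l, x k * x l * Dv (e k) (Dv (e l) g) x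
  set S3 := ∑ k, x k * x k * Dv (e k) (Dv (e k) g) x
  set S4 := ∑ k, (c k - B * x k) * Dv (e k) g x
  set S5 := ∑ l, x l * Dv (e l) g x
  ring

/-! ### Specialization to the direction `e i - e j` -/

theorem e_symm (i k : Fin m) : e i k = e k i := by
  rcases eq_or_ne i k with rfl | h
  · rfl
  · rw [show e i k = 0 from Pi.single_eq_of_ne h.symm 1,
      show e k i = 0 from Pi.single_eq_of_ne h 1]

theorem Ssum {f : (Fin m → ℝ) → ℝ} (hf : Sm f) (i j : Fin m) (x : Fin m → ℝ) :
    ∑ k, (e i - e j) k * Dv (e k) (Dv (e k) f) x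
      = Dv (e i - e j) (Dv (e i + e j) f) x := by
  have h1 : ∑ k, (e i - e j) k * Dv (e k) (Dv (e k) f) x
      = ∑ k, (e k i * Dv (e k) (Dv (e k) f) x
          + e k j * (-(Dv (e k) (Dv (e k) f) x)) + 0) := by
    refine Finset.sum_congr rfl fun k _ => ?_
    have hk : (e i - e j) k = e k i - e k j := by
      rw [Pi.sub_apply, e_symm i k, e_symm j k]
    rw [hk]; ring
  rw [h1, sum_split3, Finset.sum_const_zero, Dv_vsub,
    show Dv (e i + e j) f = fun y => Dv (e i) f y + Dv (e j) f y from
      funext fun y => Dv_vadd f y,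
    Dv_add (hf.dv (e i)) (hf.dv (e j)) x, Dv_add (hf.dv (e i)) (hf.dv (e j)) x]
  linear_combination -(Dv_comm (v := e i) (w := e j) hf x)

/-! ### The core commutation identity -/

theorem core {c : Fin m → ℝ} {B : ℝ} {i j : Fin m} (hij : i ≠ j)
    {f : (Fin m → ℝ) → ℝ} (hf : Sm f) (x : Fin m → ℝ) :
    M2 c B (fun y => y i * y j * Dv (e i - e j) (Dv (e i - e j) f) y
        + (c i * y j - c j * y i) * Dv (e i - e j) f y) x
      = x i * x j * Dv (e i - e j) (Dv (e i - e j) (M2 c B f)) x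
        + (c i * x j - c j * x i) * Dv (e i - e j) (M2 c B f) x := by
  have hsA : ∀ {g : (Fin m → ℝ) → ℝ}, Sm g → ∀ y, Dv (e i - e j) (M2 c B g) y
      = M2 c B (Dv (e i - e j) g) y + Dv (e i - e j) (Dv (e i + e j) g) y
        - 2 * (Dv (e i - e j) (Th g) y - Dv (e i - e j) g y)
        - B * Dv (e i - e j) g y := by
    intro g hg y
    rw [lemA hg (e i - e j) y, Ssum hg i j y]
  have h1 : ∀ y, Dv (e i - e j) (M2 c B f) y
      = M2 c B (Dv (e i - e j) f) y + Dv (e i + e j) (Dv (e i - e j) f) y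
        - 2 * Th (Dv (e i - e j) f) y - B * Dv (e i - e j) f y := by
    intro y
    rw [hsA hf y, Th_comm hf y, Dv_comm (v := e i - e j) (w := e i + e j) hf y]
    ring
  have h2 : Dv (e i - e j) (Dv (e i - e j) (M2 c B f)) x
      = M2 c B (Dv (e i - e j) (Dv (e i - e j) f)) x
        + 2 * Dv (e i + e j) (Dv (e i - e j) (Dv (e i - e j) f)) x
        - 4 * Th (Dv (e i - e j) (Dv (e i - e j) f)) x
        - (2 + 2 * B) * Dv (e i - e j) (Dv (e i - e j) f) x := by
    rw [show Dv (e i - e j) (M2 c B f) = fun y =>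
        M2 c B (Dv (e i - e j) f) y + Dv (e i + e j) (Dv (e i - e j) f) y
          - 2 * Th (Dv (e i - e j) f) y - B * Dv (e i - e j) f y from funext h1]
    have sE : Sm (Dv (e i - e j) f) := hf.dv _
    have sM : Sm (M2 c B (Dv (e i - e j) f)) := sE.m2 c B
    have sW : Sm (Dv (e i + e j) (Dv (e i - e j) f)) := sE.dv _
    have sT : Sm (Th (Dv (e i - e j) f)) := sE.th
    rw [Dv_sub ((sM.add sW).sub ((Sm.const 2).mul sT)) ((Sm.const B).mul sE) x,
      Dv_sub (sM.add sW) ((Sm.const 2).mul sT) x, Dv_add sM sW x,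
      Dv_const_mul sT 2 x, Dv_const_mul sE B x,
      hsA sE x,
      Dv_comm (v := e i - e j) (w := e i + e j) sE x,
      Th_comm sE x]
    ring
  have sE : Sm (Dv (e i - e j) f) := hf.dv _
  have sG : Sm (Dv (e i - e j) (Dv (e i - e j) f)) := sE.dv _
  have hu : Sm (fun y : Fin m → ℝ => y i * y j * Dv (e i - e j) (Dv (e i - e j) f) y) :=
    ((Sm.coord i).mul (Sm.coord j)).mul sG
  have hq : Sm (fun y : Fin m → ℝ => (c i * y j - c j * y i) * Dv (e i - e j) f y) :=
    (((Sm.const (c i)).mul (Sm.coord j)).sub ((Sm.const (c j)).mul (Sm.coord i))).mul sE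
  rw [M2_add hu hq c B x, lemB1 sG hij c B x, lemB2 sE i j c B x, h2, h1 x]
  linear_combination (c i * x j + c j * x i) * Dv_vsub (v := e i) (w := e j)
      (Dv (e i - e j) f) x
    - 2 * (x i * x j) * Dv_vadd (v := e i) (w := e j)
      (Dv (e i - e j) (Dv (e i - e j) f)) x
    - (c i * x j - c j * x i) * Dv_vadd (v := e i) (w := e j) (Dv (e i - e j) f) x

end S14

/-! ### Translation between `pd`-form and `Dv`-form -/

namespace S14

theorem Mop_eq {d : ℕ} (γ : Fin (d + 2) → ℝ) {f : (Fin (d + 1) → ℝ) → ℝ} (hf : Sm f)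
    (x : Fin (d + 1) → ℝ) :
    Mop γ f x = M2 (fun k => γ k.castSucc + 1)
      ((∑ k, γ k) + ((d : ℝ) + 1) + 1) f x := by
  have hpd0 : ∀ k (y : Fin (d + 1) → ℝ), pd k f y = Dv (e k) f y := fun k y => pd_eq_Dv hf y
  have hpd2 : ∀ k l (y : Fin (d + 1) → ℝ), pd k (pd l f) y
      = Dv (e k) (Dv (e l) f) y := by
    intro k l y
    rw [show pd l f = Dv (e l) f from funext fun z => pd_eq_Dv hf z, pd_eq_Dv (hf.dv (e l)) y]
  unfold Mop
  simp only [hpd2, hpd0]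
  have hsym : ∀ k l, x k * x l * Dv (e k) (Dv (e l) f) x
      = x l * x k * Dv (e l) (Dv (e k) f) x := fun k l => by
    rw [Dv_comm hf x]; ring
  rw [sym_sum (fun k l => x k * x l * Dv (e k) (Dv (e l) f) x) hsym]
  simp only [M2]

theorem Hop_eq {d : ℕ} (γ : Fin (d + 2) → ℝ) (i j : Fin (d + 1))
    {f : (Fin (d + 1) → ℝ) → ℝ} (hf : Sm f) (x : Fin (d + 1) → ℝ) :
    Hop γ i j f x
      = x i * x j * Dv (e i - e j) (Dv (e i - e j) f) x
        + ((γ i.castSucc + 1) * x j - (γ j.castSucc + 1) * x i)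
            * Dv (e i - e j) f x := by
  have hpd0 : ∀ k (y : Fin (d + 1) → ℝ), pd k f y = Dv (e k) f y := fun k y => pd_eq_Dv hf y
  have hpd2 : ∀ k l (y : Fin (d + 1) → ℝ), pd k (pd l f) y
      = Dv (e k) (Dv (e l) f) y := by
    intro k l y
    rw [show pd l f = Dv (e l) f from funext fun z => pd_eq_Dv hf z, pd_eq_Dv (hf.dv (e l)) y]
  unfold Hop
  simp only [hpd2, hpd0]
  rw [Dv_vsub,
    show Dv (e i - e j) f = fun y => Dv (e i) f y - Dv (e j) f y from
      funext fun y => Dv_vsub f y,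
    Dv_sub (hf.dv (e i)) (hf.dv (e j)) x, Dv_sub (hf.dv (e i)) (hf.dv (e j)) x]
  ring

end S14

open S14

/-- For `1 ≤ i < j ≤ d`, the operator `Ĥ_{i,j}` commutes with the Appell–Lauricella
operator `M_d^γ`. (The paper's dimension `d ≥ 2` is Lean's `d+2`.) -/
theorem statement14 (d : ℕ) (γ : Fin (d + 3) → ℝ) (i j : Fin (d + 2)) (hij : i < j)
    (f : (Fin (d + 2) → ℝ) → ℝ) (hf : ContDiff ℝ (⊤ : ℕ∞) f) (x : Fin (d + 2) → ℝ) :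
    Mop γ (Hop γ i j f) x = Hop γ i j (Mop γ f) x := by
  have hfs : Sm f := hf
  have hne : i ≠ j := ne_of_lt hij
  have hHfun : Hop γ i j f = fun y =>
      y i * y j * Dv (e i - e j) (Dv (e i - e j) f) y
        + ((γ i.castSucc + 1) * y j - (γ j.castSucc + 1) * y i)
            * Dv (e i - e j) f y := funext fun y => Hop_eq γ i j hfs y
  have hH : Sm (Hop γ i j f) := by
    rw [hHfun]
    exact (((Sm.coord i).mul (Sm.coord j)).mul ((hfs.dv _).dv _)).add
      ((((Sm.const _).mul (Sm.coord j)).sub ((Sm.const _).mul (Sm.coord i))).mul (hfs.dv _))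
  have hMfun : Mop γ f
      = M2 (fun k => γ k.castSucc + 1) ((∑ k, γ k) + (((d + 1 : ℕ) : ℝ) + 1) + 1) f :=
    funext fun y => Mop_eq γ hfs y
  have hM : Sm (Mop γ f) := by rw [hMfun]; exact hfs.m2 _ _
  calc Mop γ (Hop γ i j f) x
      = M2 (fun k => γ k.castSucc + 1) ((∑ k, γ k) + (((d + 1 : ℕ) : ℝ) + 1) + 1)
          (Hop γ i j f) x := Mop_eq γ hH x
    _ = M2 (fun k => γ k.castSucc + 1) ((∑ k, γ k) + (((d + 1 : ℕ) : ℝ) + 1) + 1)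
          (fun y => y i * y j * Dv (e i - e j) (Dv (e i - e j) f) y
            + ((γ i.castSucc + 1) * y j - (γ j.castSucc + 1) * y i)
                * Dv (e i - e j) f y) x := by rw [hHfun]
    _ = x i * x j * Dv (e i - e j) (Dv (e i - e j)
            (M2 (fun k => γ k.castSucc + 1) ((∑ k, γ k) + (((d + 1 : ℕ) : ℝ) + 1) + 1) f)) x
        + ((γ i.castSucc + 1) * x j - (γ j.castSucc + 1) * x i)
            * Dv (e i - e j)
              (M2 (fun k => γ k.castSucc + 1)
                ((∑ k, γ k) + (((d + 1 : ℕ) : ℝ) + 1) + 1) f) x := core hne hfs x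
    _ = x i * x j * Dv (e i - e j) (Dv (e i - e j) (Mop γ f)) x
        + ((γ i.castSucc + 1) * x j - (γ j.castSucc + 1) * x i)
            * Dv (e i - e j) (Mop γ f) x := by rw [hMfun]
    _ = Hop γ i j (Mop γ f) x := (Hop_eq γ i j hM x).symm
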